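/- If σ is a 132-avoiding permutation of {1,…,n}, then mmp(0,0,1,0)(σ), the number of indices i such that some j < i has σ_j < σ_i, equals the number of nodes of the decreasing binary tree T(σ) that have a nonempty left subtree. -/

import Mathlib

/-!
If `m` is the first occurrence of the maximum of `w = u ++ m :: v`, then every entry of `u` is
smaller than `m` and every entry of `v` is at most `m`. So the ascents of `w` are those of `u`,
those of `v`, and the ascent into `m` when `u ≠ []`; this is the recursion satisfied by the
number of nodes of `T(w)` with a nonempty left subtree, so that number is the number of
ascents of `w`, for every list `w`. In a 132-avoiding permutation, an entry `σ i` with some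
smaller entry to its left has `σ (i - 1) < σ i`: otherwise the smaller entry, `σ (i - 1)` and
`σ i` form a 132. So both sides count the ascents of `σ`.
-/

/-- A permutation `σ` of `{1,…,n}` (as a permutation of `Fin n`) avoids the pattern 132 if
there are no indices `i < j < k` with `σ i < σ k < σ j`. -/
def Avoids132 (n : ℕ) (σ : Equiv.Perm (Fin n)) : Prop :=
  ∀ i j k : Fin n, i < j → j < k → ¬(σ i < σ k ∧ σ k < σ j)

/-- `mmp n a b c d σ` is the number of indices `i` matching the marked mesh pattern
`MMP(a,b,c,d)` in `σ`: there are at least `a` indices `j > i` with `σ j > σ i`,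
at least `b` indices `j < i` with `σ j > σ i`, at least `c` indices `j < i` with
`σ j < σ i`, and at least `d` indices `j > i` with `σ j < σ i`. -/
noncomputable def mmp (n a b c d : ℕ) (σ : Equiv.Perm (Fin n)) : ℕ :=
  Nat.card {i : Fin n |
    a ≤ Nat.card {j : Fin n | i < j ∧ σ i < σ j} ∧
    b ≤ Nat.card {j : Fin n | j < i ∧ σ i < σ j} ∧
    c ≤ Nat.card {j : Fin n | j < i ∧ σ j < σ i} ∧
    d ≤ Nat.card {j : Fin n | i < j ∧ σ j < σ i}}

/-- The maximum of a nonempty list of naturals (via `foldr`) is an element of the list. -/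
lemma foldr_max_mem : ∀ l : List ℕ, l ≠ [] → l.foldr max 0 ∈ l := by
  intro l
  induction l with
  | nil => simp
  | cons a as ih =>
    intro _
    by_cases h : as = []
    · subst h; simp
    · have hmem := ih h
      simp only [List.foldr_cons]
      rcases le_total (as.foldr max 0) a with h' | h'
      · rw [max_eq_left h']; exact List.mem_cons_self
      · rw [max_eq_right h']; exact List.mem_cons_of_mem a hmem

/-- The decreasing binary tree `T(w)` of a sequence `w` of distinct integers: `T` of the
empty sequence is the empty tree, and if `w = u · m · v` where `m` is the maximum entry
of `w`, then `T(w)` has root labeled `m`, left subtree `T(u)` and right subtree `T(v)`. -/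
def decTree : List ℕ → BinaryTree ℕ
  | [] => BinaryTree.nil
  | a :: as =>
    BinaryTree.node ((a :: as).foldr max 0)
      (decTree ((a :: as).take ((a :: as).idxOf ((a :: as).foldr max 0))))
      (decTree ((a :: as).drop ((a :: as).idxOf ((a :: as).foldr max 0) + 1)))
termination_by l => l.length
decreasing_by
  · have hmem : (a :: as).foldr max 0 ∈ a :: as := foldr_max_mem _ (by simp)
    have hlt : (a :: as).idxOf ((a :: as).foldr max 0) < (a :: as).length :=
      List.idxOf_lt_length_iff.mpr hmem
    simp only [List.length_take]
    omega
  · simp only [List.length_drop, List.length_cons]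
    omega

/-- The number of nodes of a binary tree having a nonempty left subtree. -/
def leftNodes {α : Type*} : BinaryTree α → ℕ
  | BinaryTree.nil => 0
  | BinaryTree.node _ BinaryTree.nil r => leftNodes r
  | BinaryTree.node _ (BinaryTree.node b ll lr) r => 1 + leftNodes (BinaryTree.node b ll lr) + leftNodes r

open Finset

section Ascents

variable {α : Type*} [LinearOrder α]

def numAscents : List α → ℕ
  | a :: b :: t => (if a < b then 1 else 0) + numAscents (b :: t)
  | _ => 0

theorem numAscents_append_cons {u v : List α} {m : α} (hu : ∀ x ∈ u, x < m)
    (hv : ∀ x ∈ v, x ≤ m) :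
    numAscents (u ++ m :: v) = (if u = [] then 0 else 1) + numAscents u + numAscents v := by
  induction u with
  | nil =>
    cases v with
    | nil => rfl
    | cons b t => simp [numAscents, not_lt.2 (hv b List.mem_cons_self)]
  | cons a u ih =>
    have ih := ih fun x hx => hu x (List.mem_cons_of_mem a hx)
    cases u with
    | nil => simpa [numAscents, hu a List.mem_cons_self] using ih
    | cons b t =>
      simp only [List.cons_append, numAscents, List.cons_ne_nil, if_false] at ih ⊢
      omega

theorem exists_eq_append_cons_max {l : List α} (hl : l ≠ []) :
    ∃ u m v, l = u ++ m :: v ∧ (∀ x ∈ u, x < m) ∧ ∀ x ∈ v, x ≤ m := by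
  induction l with
  | nil => exact absurd rfl hl
  | cons a t ih =>
    rcases eq_or_ne t [] with rfl | ht
    · exact ⟨[], a, [], rfl, by simp, by simp⟩
    obtain ⟨u, m, v, rfl, hu, hv⟩ := ih ht
    by_cases ham : a < m
    · exact ⟨a :: u, m, v, rfl, by simpa [ham] using hu, hv⟩
    · refine ⟨[], a, u ++ m :: v, rfl, by simp, fun x hx => ?_⟩
      rcases List.mem_append.1 hx with hx | hx
      · exact ((hu x hx).trans_le (not_lt.1 ham)).le
      · exact (List.mem_cons.1 hx).elim (fun h => h ▸ not_lt.1 ham)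
          fun hx => (hv x hx).trans (not_lt.1 ham)

theorem numAscents_ofFn {n : ℕ} (f : Fin (n + 1) → α) :
    numAscents (List.ofFn f) = #{i : Fin n | f i.castSucc < f i.succ} := by
  induction n with
  | zero => simp [numAscents]
  | succ n ih =>
    rw [List.ofFn_succ, List.ofFn_succ, numAscents.eq_1,
      ← List.ofFn_succ (f := fun i => f i.succ), ih (fun i => f i.succ),
      Fin.card_filter_univ_succ']
    congr 1

end Ascents

theorem leftNodes_node {α : Type*} [DecidableEq α] (x : α) (l r : BinaryTree α) :
    leftNodes (.node x l r) = (if l = .nil then 0 else 1) + leftNodes l + leftNodes r := by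
  cases l <;> simp [leftNodes]

theorem decTree_eq_nil_iff {l : List ℕ} : decTree l = .nil ↔ l = [] := by
  cases l <;> simp [decTree]

theorem decTree_append_cons {u v : List ℕ} {m : ℕ} (hu : ∀ x ∈ u, x < m)
    (hv : ∀ x ∈ v, x ≤ m) :
    decTree (u ++ m :: v) = .node m (decTree u) (decTree v) := by
  have hmax : (u ++ m :: v).foldr max 0 = m := by
    refine le_antisymm (List.max_le_of_forall_le _ _ fun x hx => ?_)
      (List.le_max_of_le (by simp) le_rfl)
    rcases List.mem_append.1 hx with hx | hx
    · exact (hu x hx).le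
    · exact (List.mem_cons.1 hx).elim le_of_eq (hv x)
  have hidx : (u ++ m :: v).idxOf m = u.length := by
    rw [List.idxOf_append_of_notMem fun hm => lt_irrefl m (hu m hm), List.idxOf_cons_self, add_zero]
  obtain ⟨a, as, hcons⟩ : ∃ a as, u ++ m :: v = a :: as :=
    List.exists_cons_of_ne_nil (by simp)
  rw [hcons, decTree, ← hcons, hmax, hidx]
  simp

theorem leftNodes_decTree (l : List ℕ) : leftNodes (decTree l) = numAscents l := by
  induction h : l.length using Nat.strong_induction_on generalizing l with
  | _ k ih =>
    rcases eq_or_ne l [] with rfl | hl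
    · simp [decTree, leftNodes, numAscents]
    obtain ⟨u, m, v, rfl, hu, hv⟩ := exists_eq_append_cons_max hl
    rw [decTree_append_cons hu hv, leftNodes_node, numAscents_append_cons hu hv,
      ih u.length (by simp [← h]) u rfl, ih v.length (by simp [← h]; omega) v rfl]
    simp [decTree_eq_nil_iff]

theorem mmp_zero_zero_one_zero (n : ℕ) (σ : Equiv.Perm (Fin n)) :
    mmp n 0 0 1 0 σ = #{i | ∃ j < i, σ j < σ i} := by
  rw [mmp, Nat.card_eq_card_toFinset]
  congr
  ext i
  simp [Nat.one_le_iff_ne_zero]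

theorem Avoids132.exists_lt_succ_iff {n : ℕ} {σ : Equiv.Perm (Fin (n + 1))}
    (hσ : Avoids132 (n + 1) σ) (i : Fin n) :
    (∃ j < i.succ, σ j < σ i.succ) ↔ σ i.castSucc < σ i.succ := by
  refine ⟨fun ⟨j, hji, hj⟩ => ?_, fun h => ⟨i.castSucc, Fin.castSucc_lt_succ, h⟩⟩
  rcases (Fin.le_castSucc_iff.2 hji).lt_or_eq with hji | rfl
  · by_contra hasc
    have hdesc : σ i.succ < σ i.castSucc :=
      lt_of_le_of_ne (not_lt.1 hasc) (σ.injective.ne (Fin.castSucc_lt_succ (i := i)).ne')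
    exact hσ j i.castSucc i.succ hji Fin.castSucc_lt_succ ⟨hj, hdesc⟩
  · exact hj

/-- For a 132-avoiding permutation `σ` of `{1,…,n}`, `mmp(0,0,1,0)(σ)` — the number of
indices `i` such that some `j < i` has `σ j < σ i` — equals the number of nodes with a
nonempty left subtree in the decreasing binary tree of the word `σ₁ … σₙ`
(written here with its 1-based values `(σ i : ℕ) + 1`). -/
theorem mmp0010_eq_leftNodes_decTree (n : ℕ) (σ : Equiv.Perm (Fin n))
    (hσ : Avoids132 n σ) :
    mmp n 0 0 1 0 σ = leftNodes (decTree (List.ofFn fun i : Fin n => (σ i : ℕ) + 1)) := by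
  rw [mmp_zero_zero_one_zero, leftNodes_decTree]
  cases n with
  | zero => simp [numAscents]
  | succ n =>
    rw [numAscents_ofFn, Fin.card_filter_univ_succ']
    simp [hσ.exists_lt_succ_iff]
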